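/- If c < v, then every root of the characteristic polynomial of the Jacobian matrix J(1,0,0) of the reduced replicator vector field at the equilibrium P₅ = (1,0,0) is a negative real number; explicitly, the eigenvalues (c−v)/2 and (c−v)/4 (the latter with multiplicity two) are negative. Moreover, for all real v and c the three eigenvalues of J(1,0,0) all have the same sign, so P₅ is never a saddle point. -/

import Mathlib

/-!
At `P₅ = (1, 0, 0)` the Jacobian is upper triangular with diagonal `(c - v)/2, (c - v)/4, (c - v)/4`
(the coordinates `y` and `z` factor out of `F₂` and `F₃`), so the eigenvalues are these diagonal
entries: positive multiples of `c - v`, hence all of one sign.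
-/

open Polynomial

noncomputable section

/-- The reduced replicator vector field of the asymmetric Hawk-Dove game. -/
def F (v c : ℝ) (p : Fin 3 → ℝ) : Fin 3 → ℝ :=
  ![ (1/4) * p 0 * (c * (2*(p 0)^2 + 2*(p 0)*(p 1 + p 2 - 1) + 2*(p 1)*(p 2) - p 1 - p 2)
        - v * (2*(p 0) + p 1 + p 2 - 2)),
     -(1/4) * p 1 * (v * (2*(p 0) + p 1 + p 2 - 1) - c * (2*(p 0) + 2*(p 1) - 1) * (p 0 + p 2)),
     -(1/4) * p 2 * (v * (2*(p 0) + p 1 + p 2 - 1) - c * (p 0 + p 1) * (2*(p 0) + 2*(p 2) - 1)) ]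

/-- The Jacobian matrix of `F v c` at `p`: the matrix of the Fréchet derivative
with respect to the standard basis. -/
def J (v c : ℝ) (p : Fin 3 → ℝ) : Matrix (Fin 3) (Fin 3) ℝ :=
  Matrix.of fun i j => fderiv ℝ (F v c) p (Pi.single j 1) i

theorem fderiv_single_apply_eq_deriv_update {𝕜 ι : Type*} [NontriviallyNormedField 𝕜]
    [Fintype ι] [DecidableEq ι] {f : (ι → 𝕜) → ι → 𝕜} {p : ι → 𝕜} (hf : DifferentiableAt 𝕜 f p)
    (i j : ι) : fderiv 𝕜 f p (Pi.single j 1) i = deriv (fun t => f (Function.update p j t) i) (p j) := by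
  rw [← Function.update_eq_self j p] at hf
  have h := hf.hasFDerivAt.comp_hasDerivAt (p j) (hasDerivAt_update p j (p j))
  rw [Function.update_eq_self] at h
  exact (hasDerivAt_pi.1 h i).deriv.symm

theorem Matrix.IsUpperTriangular.aeval_charpoly_eq_zero_iff {R A n : Type*} [CommRing R]
    [CommRing A] [IsDomain A] [Algebra R A] [Fintype n] [DecidableEq n] [LinearOrder n]
    {M : Matrix n n R} (hM : M.IsUpperTriangular) {μ : A} :
    aeval μ M.charpoly = 0 ↔ ∃ i, μ = algebraMap R A (M i i) := by
  simp [charpoly_of_isUpperTriangular M hM, Finset.prod_eq_zero_iff, sub_eq_zero]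

theorem Matrix.IsUpperTriangular.isRoot_charpoly_iff {R n : Type*} [CommRing R] [IsDomain R]
    [Fintype n] [DecidableEq n] [LinearOrder n] {M : Matrix n n R} (hM : M.IsUpperTriangular)
    {μ : R} : M.charpoly.IsRoot μ ↔ ∃ i, μ = M i i := by
  simpa using hM.aeval_charpoly_eq_zero_iff (μ := μ)

theorem differentiable_F (v c : ℝ) : Differentiable ℝ (F v c) := by
  refine differentiable_pi.2 fun i => ?_
  fin_cases i <;> simp only [F, Fin.zero_eta, Fin.mk_one, Fin.reduceFinMk, Matrix.cons_val] <;> fun_prop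

theorem J_one_zero_zero (v c : ℝ) :
    J v c ![1, 0, 0] = !![(c-v)/2, (c-v)/4, (c-v)/4; 0, (c-v)/4, 0; 0, 0, (c-v)/4] := by
  ext i j
  rw [J, Matrix.of_apply, fderiv_single_apply_eq_deriv_update (differentiable_F v c _)]
  fin_cases i <;> fin_cases j <;> simp (disch := fun_prop) [F, Function.update_apply] <;> ring

theorem J_one_zero_zero_isUpperTriangular (v c : ℝ) : (J v c ![1, 0, 0]).IsUpperTriangular := by
  rw [J_one_zero_zero]
  intro i j hji
  fin_cases i <;> fin_cases j <;> simp_all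

theorem J_one_zero_zero_diag (v c : ℝ) (i : Fin 3) :
    J v c ![1, 0, 0] i i = (c - v)/2 ∨ J v c ![1, 0, 0] i i = (c - v)/4 := by
  rw [J_one_zero_zero]
  fin_cases i <;> simp

theorem P5_stable_node_never_saddle (v c : ℝ) :
    (c < v →
      ((c - v)/2 < 0 ∧ (c - v)/4 < 0) ∧
      ∀ μ : ℂ, aeval μ ((J v c ![1, 0, 0]).charpoly) = 0 →
        ∃ r : ℝ, μ = (r : ℂ) ∧ r < 0) ∧
    ¬ ∃ μ₁ μ₂ : ℝ, (J v c ![1, 0, 0]).charpoly.IsRoot μ₁ ∧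
      (J v c ![1, 0, 0]).charpoly.IsRoot μ₂ ∧ μ₁ < 0 ∧ 0 < μ₂ := by
  have hU := J_one_zero_zero_isUpperTriangular v c
  refine ⟨fun hcv => ⟨⟨by linarith, by linarith⟩, fun μ hμ => ?_⟩, ?_⟩
  · obtain ⟨i, rfl⟩ := hU.aeval_charpoly_eq_zero_iff.1 hμ
    refine ⟨J v c ![1, 0, 0] i i, rfl, ?_⟩
    rcases J_one_zero_zero_diag v c i with h | h <;> rw [h] <;> linarith
  · rintro ⟨μ₁, μ₂, h₁, h₂, hμ₁, hμ₂⟩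
    obtain ⟨i₁, rfl⟩ := hU.isRoot_charpoly_iff.1 h₁
    obtain ⟨i₂, rfl⟩ := hU.isRoot_charpoly_iff.1 h₂
    rcases J_one_zero_zero_diag v c i₁ with h | h <;>
      rcases J_one_zero_zero_diag v c i₂ with h' | h' <;> linarith
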